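/- Let 1 < q < ∞, v ∈ ℝⁿ and 0 < λ < ‖v‖_{q̄}. Then x* ∈ ℝⁿ is the minimizer of g(x) = (1/2)‖x − v‖₂² + λ‖x‖_q if and only if x* ≠ 0 and x* + λ‖x*‖_q^{1−q} x*^{(q−1)} = v, where x^{(q−1)} is defined componentwise by (x^{(q−1)})ᵢ = sgn(xᵢ)|xᵢ|^{q−1}. -/

import Mathlib

/-
For `x ≠ 0` the vector `w = ‖x‖_q^{1-q} x^{(q-1)}` is the gradient of `‖·‖_q` at `x`; it
satisfies `⟨w, x⟩ = ‖x‖_q` and `‖w‖_{q̄} = 1`, so Hölder gives `⟨w, y⟩ ≤ ‖y‖_q` for all `y`.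
If `x ≠ 0` solves `x + λ w = v`, expanding the square gives
`g(y) - g(x) = ½‖y - x‖₂² + λ (‖y‖_q - ⟨w, y⟩) ≥ 0`.
Conversely, a minimizer `x ≠ 0` is a critical point of `g`, which is differentiable there, so
`x - v + λ w = 0`. Finally `0` is not a minimizer: with `u` the gradient of `‖·‖_{q̄}` at `v`,
`g(t u) - g(0) = t² ‖u‖₂² / 2 - t (‖v‖_{q̄} - λ) < 0` for small `t > 0`.
-/

open scoped BigOperators

/-- The vector ℓq norm for a real exponent `q`. -/
noncomputable def lqNormR {n : ℕ} (q : ℝ) (x : Fin n → ℝ) : ℝ :=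
  (∑ i, |x i| ^ q) ^ (1 / q)

/-- The objective `g(x) = (1/2)‖x − v‖₂² + λ‖x‖_q`. -/
noncomputable def gObjR {n : ℕ} (q : ℝ) (lam : ℝ) (v x : Fin n → ℝ) : ℝ :=
  (1 / 2) * ∑ i, (x i - v i) ^ 2 + lam * lqNormR q x

open Finset

noncomputable def lqNormGrad {n : ℕ} (q : ℝ) (x : Fin n → ℝ) : Fin n → ℝ :=
  fun i => lqNormR q x ^ (1 - q) * (Real.sign (x i) * |x i| ^ (q - 1))

section SignedPower

variable {q : ℝ}

lemma sign_mul_abs_rpow_sub_one_mul_self (hq : q ≠ 0) (t : ℝ) :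
    Real.sign t * |t| ^ (q - 1) * t = |t| ^ q := by
  rcases lt_trichotomy t 0 with h | rfl | h
  · rw [Real.sign_of_neg h, Real.rpow_sub_one (abs_pos.2 h.ne).ne', abs_of_neg h]
    field_simp [h.ne]
  · simp [Real.zero_rpow hq]
  · rw [Real.sign_of_pos h, Real.rpow_sub_one (abs_pos.2 h.ne').ne', abs_of_pos h]
    field_simp [h.ne']

lemma abs_sign_mul_abs_rpow (hq : q ≠ 0) (t : ℝ) : |Real.sign t * |t| ^ q| = |t| ^ q := by
  rcases lt_trichotomy t 0 with h | rfl | h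
  · simp [Real.sign_of_neg h, abs_of_nonneg (Real.rpow_nonneg (abs_nonneg t) q)]
  · simp [Real.zero_rpow hq]
  · simp [Real.sign_of_pos h, abs_of_nonneg (Real.rpow_nonneg (abs_nonneg t) q)]

lemma abs_rpow_sub_two_mul_self (q t : ℝ) : |t| ^ (q - 2) * t = Real.sign t * |t| ^ (q - 1) := by
  rcases lt_trichotomy t 0 with h | rfl | h
  · rw [Real.sign_of_neg h, show q - 1 = q - 2 + 1 by ring,
      Real.rpow_add_one (abs_pos.2 h.ne).ne', abs_of_neg h]
    ring
  · simp
  · rw [Real.sign_of_pos h, show q - 1 = q - 2 + 1 by ring,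
      Real.rpow_add_one (abs_pos.2 h.ne').ne', abs_of_pos h]
    ring

end SignedPower

section LqNorm

variable {n : ℕ} {p q : ℝ} {x : Fin n → ℝ}

lemma lqNormR_nonneg (q : ℝ) (x : Fin n → ℝ) : 0 ≤ lqNormR q x :=
  Real.rpow_nonneg (sum_nonneg fun _ _ => Real.rpow_nonneg (abs_nonneg _) q) _

lemma lqNormR_rpow (hq : q ≠ 0) (x : Fin n → ℝ) : lqNormR q x ^ q = ∑ i, |x i| ^ q := by
  rw [lqNormR, ← Real.rpow_mul (sum_nonneg fun _ _ => Real.rpow_nonneg (abs_nonneg _) q),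
    one_div_mul_cancel hq, Real.rpow_one]

lemma sum_abs_rpow_pos (q : ℝ) (hx : x ≠ 0) : 0 < ∑ i, |x i| ^ q := by
  obtain ⟨i, hi⟩ := Function.ne_iff.1 hx
  exact sum_pos' (fun _ _ => Real.rpow_nonneg (abs_nonneg _) q)
    ⟨i, mem_univ i, Real.rpow_pos_of_pos (abs_pos.2 hi) q⟩

lemma lqNormR_pos (q : ℝ) (hx : x ≠ 0) : 0 < lqNormR q x :=
  Real.rpow_pos_of_pos (sum_abs_rpow_pos q hx) _

lemma lqNormR_zero (hq : q ≠ 0) : lqNormR q (0 : Fin n → ℝ) = 0 := by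
  simp [lqNormR, Real.zero_rpow hq, hq]

lemma lqNormR_const_mul (hq : 0 < q) (c : ℝ) (x : Fin n → ℝ) :
    lqNormR q (fun i => c * x i) = |c| * lqNormR q x := by
  simp only [lqNormR, abs_mul, Real.mul_rpow (abs_nonneg c) (abs_nonneg _), ← mul_sum]
  rw [Real.mul_rpow (Real.rpow_nonneg (abs_nonneg c) q)
      (sum_nonneg fun _ _ => Real.rpow_nonneg (abs_nonneg _) q),
    ← Real.rpow_mul (abs_nonneg c), mul_one_div_cancel hq.ne', Real.rpow_one]

lemma sum_lqNormGrad_mul_self (hq : q ≠ 0) (hx : x ≠ 0) :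
    ∑ i, lqNormGrad q x i * x i = lqNormR q x := by
  simp only [lqNormGrad, mul_assoc, sign_mul_abs_rpow_sub_one_mul_self hq, ← mul_sum]
  rw [← lqNormR_rpow hq, ← Real.rpow_add (lqNormR_pos q hx)]
  norm_num

lemma lqNormR_lqNormGrad (hpq : p.HolderConjugate q) (hx : x ≠ 0) :
    lqNormR p (lqNormGrad q x) = 1 := by
  have hN := lqNormR_pos q hx
  have hq := hpq.symm.pos.ne'
  have hexp : (q - 1) * p = q := hpq.symm.sub_one_mul_conj
  have hterm : ∀ i, |lqNormGrad q x i| ^ p = lqNormR q x ^ (-q) * |x i| ^ q := fun i => by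
    rw [lqNormGrad, abs_mul, abs_of_pos (Real.rpow_pos_of_pos hN _),
      abs_sign_mul_abs_rpow hpq.symm.sub_one_ne_zero,
      Real.mul_rpow (Real.rpow_nonneg hN.le _) (Real.rpow_nonneg (abs_nonneg _) _),
      ← Real.rpow_mul hN.le, ← Real.rpow_mul (abs_nonneg _), hexp]
    congr 2; linear_combination -hexp
  rw [lqNormR, sum_congr rfl fun i _ => hterm i, ← mul_sum, ← lqNormR_rpow hq,
    ← Real.rpow_add hN]
  simp

lemma sum_lqNormGrad_mul_le (hq : 1 < q) (hx : x ≠ 0) (y : Fin n → ℝ) :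
    ∑ i, lqNormGrad q x i * y i ≤ lqNormR q y := by
  have hpq := (Real.HolderConjugate.conjExponent hq).symm
  calc ∑ i, lqNormGrad q x i * y i
      ≤ lqNormR _ (lqNormGrad q x) * lqNormR q y := Real.inner_le_Lp_mul_Lq univ _ y hpq
    _ = lqNormR q y := by rw [lqNormR_lqNormGrad hpq hx, one_mul]

end LqNorm

section Gradient

variable {n : ℕ} {q : ℝ} {x : Fin n → ℝ}

open ContinuousLinearMap in
lemma hasFDerivAt_lqNormR (hq : 1 < q) (hx : x ≠ 0) :
    HasFDerivAt (𝕜 := ℝ) (lqNormR q) (∑ i, lqNormGrad q x i • proj i) x := by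
  have hS : HasFDerivAt (𝕜 := ℝ) (fun y : Fin n → ℝ => ∑ i, |y i| ^ q)
      (∑ i, (q * |x i| ^ (q - 2) * x i) • proj i) x :=
    HasFDerivAt.fun_sum fun i _ => (hasDerivAt_abs_rpow (x i) hq).comp_hasFDerivAt
      (f := fun y : Fin n → ℝ => y i) x (hasFDerivAt_apply i x)
  have hpow := (Real.hasDerivAt_rpow_const (p := 1 / q)
    (Or.inl (sum_abs_rpow_pos q hx).ne')).comp_hasFDerivAt x hS
  refine hpow.congr_fderiv (ContinuousLinearMap.ext fun y => ?_)
  have hN : (∑ i, |x i| ^ q) ^ (1 / q - 1) = lqNormR q x ^ (1 - q) := by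
    rw [← lqNormR_rpow (by linarith), ← Real.rpow_mul (lqNormR_nonneg q x)]
    congr 1; field_simp
  simp only [_root_.sum_apply, smul_apply, proj_apply, smul_eq_mul, lqNormGrad, hN,
    mul_sum]
  refine sum_congr rfl fun i _ => ?_
  rw [← abs_rpow_sub_two_mul_self]
  field_simp

end Gradient

lemma nonpos_of_forall_pos_mul_le_mul_sq {a b : ℝ} (h : ∀ t, 0 < t → b * t ≤ a * t ^ 2) :
    b ≤ 0 := by
  by_contra! hb
  rcases le_or_gt a 0 with ha | ha
  · nlinarith [h 1 one_pos]
  · have := h (b / (2 * a)) (by positivity)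
    field_simp at this
    nlinarith

section Objective

variable {n : ℕ} {p q lam : ℝ} {v x : Fin n → ℝ}

open ContinuousLinearMap in
lemma hasFDerivAt_gObjR (hq : 1 < q) (hx : x ≠ 0) :
    HasFDerivAt (𝕜 := ℝ) (gObjR q lam v)
      (∑ i, (x i - v i + lam * lqNormGrad q x i) • proj i) x := by
  have hquad : HasFDerivAt (𝕜 := ℝ) (fun y : Fin n → ℝ => ∑ i, (y i - v i) ^ 2)
      (∑ i, (2 * (x i - v i)) • proj i) x :=
    HasFDerivAt.fun_sum fun i _ => by
      simpa using ((hasFDerivAt_apply i x).sub_const (v i)).pow 2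
  refine ((hquad.const_mul (1 / 2)).add ((hasFDerivAt_lqNormR hq hx).const_mul lam)).congr_fderiv
    (ContinuousLinearMap.ext fun y => ?_)
  simp only [add_apply, smul_apply, _root_.sum_apply, proj_apply, smul_eq_mul, mul_sum,
    ← sum_add_distrib]
  exact sum_congr rfl fun i _ => by ring

lemma stationary_of_isLocalMin (hq : 1 < q) (hx : x ≠ 0) (hmin : IsLocalMin (gObjR q lam v) x)
    (i : Fin n) : x i + lam * lqNormGrad q x i = v i := by
  have hzero : x i - v i + lam * lqNormGrad q x i = 0 := by
    simpa [Pi.single_apply] using congrArg (fun L => L (Pi.single i 1))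
      (hmin.hasFDerivAt_eq_zero (hasFDerivAt_gObjR hq hx))
  linarith

lemma gObjR_le_of_stationary (hq : 1 < q) (hlam : 0 ≤ lam) (hx : x ≠ 0)
    (hstat : ∀ i, x i + lam * lqNormGrad q x i = v i) (y : Fin n → ℝ) :
    gObjR q lam v x ≤ gObjR q lam v y := by
  have hexpand : ∑ i, (y i - v i) ^ 2 = ∑ i, (x i - v i) ^ 2 + ∑ i, (y i - x i) ^ 2
      + 2 * lam * (∑ i, lqNormGrad q x i * x i - ∑ i, lqNormGrad q x i * y i) := by
    simp only [← hstat, mul_sub, mul_sum, ← sum_add_distrib, ← sum_sub_distrib]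
    exact sum_congr rfl fun i _ => by ring
  have hholder := mul_le_mul_of_nonneg_left (sum_lqNormGrad_mul_le hq hx y) hlam
  have hsq : 0 ≤ ∑ i, (y i - x i) ^ 2 := sum_nonneg fun i _ => sq_nonneg _
  rw [gObjR, gObjR, hexpand, sum_lqNormGrad_mul_self (by linarith) hx]
  linarith

lemma exists_gObjR_lt_gObjR_zero (hpq : p.HolderConjugate q) (hlam : 0 ≤ lam)
    (hv : lam < lqNormR p v) : ∃ y, gObjR q lam v y < gObjR q lam v 0 := by
  have hv0 : v ≠ 0 := by
    rintro rfl
    rw [lqNormR_zero hpq.ne_zero] at hv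
    linarith
  by_contra! hmin
  set u := lqNormGrad p v
  refine (sub_pos.2 hv).not_ge (nonpos_of_forall_pos_mul_le_mul_sq
    (a := (1 / 2) * ∑ i, u i ^ 2) fun t ht => ?_)
  have hexpand : ∑ i, (t * u i - v i) ^ 2
      = t ^ 2 * ∑ i, u i ^ 2 - 2 * t * ∑ i, u i * v i + ∑ i, v i ^ 2 := by
    simp only [mul_sum, ← sum_sub_distrib, ← sum_add_distrib]
    exact sum_congr rfl fun i _ => by ring
  have := hmin fun i => t * u i
  rw [gObjR, gObjR, hexpand, lqNormR_const_mul hpq.symm.pos, lqNormR_lqNormGrad hpq.symm hv0,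
    sum_lqNormGrad_mul_self hpq.ne_zero hv0, lqNormR_zero hpq.symm.ne_zero, abs_of_pos ht] at this
  simp only [Pi.zero_apply, zero_sub, neg_sq] at this
  linarith

end Objective

/-- Let `1 < q < ∞`, `v ∈ ℝⁿ` and `0 < λ < ‖v‖_{q̄}` where `q̄ = q/(q−1)`.
Then `x*` is the minimizer of `g(x) = (1/2)‖x − v‖₂² + λ‖x‖_q` iff `x* ≠ 0` and
`x* + λ‖x*‖_q^{1−q} x*^{(q−1)} = v`, where `(x^{(q−1)})ᵢ = sgn(xᵢ)|xᵢ|^{q−1}`. -/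
theorem stmt2 {n : ℕ} (q : ℝ) (hq : 1 < q) (v : Fin n → ℝ) (lam : ℝ)
    (hlam : 0 < lam) (hlam' : lam < lqNormR (q / (q - 1)) v) (x : Fin n → ℝ) :
    (∀ y : Fin n → ℝ, gObjR q lam v x ≤ gObjR q lam v y) ↔
      (x ≠ 0 ∧ ∀ i, x i + lam * lqNormR q x ^ (1 - q) *
        (Real.sign (x i) * |x i| ^ (q - 1)) = v i) := by
  simp only [mul_assoc lam]
  change _ ↔ x ≠ 0 ∧ ∀ i, x i + lam * lqNormGrad q x i = v i
  constructor
  · intro hmin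
    have hx : x ≠ 0 := by
      rintro rfl
      obtain ⟨y, hy⟩ := exists_gObjR_lt_gObjR_zero
        (Real.HolderConjugate.conjExponent hq).symm hlam.le hlam'
      exact (hmin y).not_gt hy
    exact ⟨hx, stationary_of_isLocalMin hq hx (.of_forall hmin)⟩
  · rintro ⟨hx, hstat⟩
    exact gObjR_le_of_stationary hq hlam.le hx hstat
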